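/- Let A be an abelian category and (U,V) a t-structure on D^b(A) with heart H(U) = U ∩ V. The following conditions are equivalent: (1) for all A,B ∈ H(U), all n ≥ 2, and every morphism f: A → B[n] in D^b(A), there is an epimorphism C → A in H(U) such that the composite C → A → B[n] is zero; (2) for all A,B ∈ H(U), all n ≥ 2, and every morphism f: A → B[n], there is a monomorphism B → C in H(U) such that the composite A → B[n] → C[n] is zero; (3) for all A,B ∈ H(U), all n ≥ 2, and every morphism f: A → B[n], there is a sequence of morphisms A = A_0 → A_1[1] → A_2[2] → ⋯ → A_n[n] = B[n] with each A_i ∈ H(U) that composes to f. -/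

import Mathlib

/-!
Common definitions for formalizing statements from
"Derived equivalences for hereditary algebras: the role of the Serre functor".
-/

noncomputable section

open CategoryTheory CategoryTheory.Limits CategoryTheory.Pretriangulated

universe w₁ v₁ u₁ w v u

namespace Paper

variable (D : Type u) [Category.{v} D]

/-- An object of a preadditive category is indecomposable if it is nonzero and any
biproduct decomposition `X ≅ Y ⊞ Z` has `Y = 0` or `Z = 0` (expressed elementarily). -/
def IndecomposableObj [Preadditive D] (X : D) : Prop :=
  ¬ IsZero X ∧
    ∀ (Y Z : D) (i : Y ⟶ X) (p : X ⟶ Y) (j : Z ⟶ X) (q : X ⟶ Z),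
      i ≫ p = 𝟙 Y → j ≫ q = 𝟙 Z → i ≫ q = 0 → j ≫ p = 0 → p ≫ i + q ≫ j = 𝟙 X →
        IsZero Y ∨ IsZero Z

/-- A morphism `f : A ⟶ C` is right minimal if any `h : A ⟶ A` with `h ≫ f = f`
is an automorphism. -/
def RightMinimal {A C : D} (f : A ⟶ C) : Prop :=
  ∀ h : A ⟶ A, h ≫ f = f → IsIso h

/-- The equivalence relation `f ∼_C g` on morphisms with target `C`. -/
def EquivOver {A B C : D} (f : A ⟶ C) (g : B ⟶ C) : Prop :=
  (∃ h₁ : A ⟶ B, h₁ ≫ g = f) ∧ (∃ h₂ : B ⟶ A, h₂ ≫ f = g)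

section Serre

variable (k : Type u₁) [Field k] [Preadditive D] [CategoryTheory.Linear k D]

/-- A Serre functor on a `k`-linear category `D`: an autoequivalence `F` together with
isomorphisms `Hom(X,Y) ≅ Hom(Y, F X)*`, natural in `X` and `Y`. -/
structure SerreFunctor where
  F : D ⥤ D
  isEquivalence : F.IsEquivalence
  η : ∀ X Y : D, (X ⟶ Y) ≃ₗ[k] Module.Dual k (Y ⟶ F.obj X)
  naturality_left : ∀ ⦃X' X Y : D⦄ (u : X' ⟶ X) (f : X ⟶ Y) (g : Y ⟶ F.obj X'),
    η X' Y (u ≫ f) g = η X Y f (g ≫ F.map u)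
  naturality_right : ∀ ⦃X Y Y' : D⦄ (f : X ⟶ Y) (v : Y ⟶ Y') (g : Y' ⟶ F.obj X),
    η X Y' (f ≫ v) g = η X Y f (v ≫ g)

/-- A Serre functor on the strictly full subcategory of `D` whose objects are `S`;
the Hom-spaces are the ambient ones. -/
structure SerreFunctorOn (S : Set D) where
  F : ObjectProperty.FullSubcategory (· ∈ S) ⥤ ObjectProperty.FullSubcategory (· ∈ S)
  isEquivalence : F.IsEquivalence
  η : ∀ X Y : ObjectProperty.FullSubcategory (· ∈ S),
    (X.obj ⟶ Y.obj) ≃ₗ[k] Module.Dual k (Y.obj ⟶ (F.obj X).obj)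
  naturality_left : ∀ ⦃X' X Y : ObjectProperty.FullSubcategory (· ∈ S)⦄ (u : X' ⟶ X) (f : X.obj ⟶ Y.obj)
      (g : Y.obj ⟶ (F.obj X').obj),
    η X' Y (u.hom ≫ f) g
      = η X Y f (g ≫ (F.map u).hom)
  naturality_right : ∀ ⦃X Y Y' : ObjectProperty.FullSubcategory (· ∈ S)⦄ (f : X.obj ⟶ Y.obj) (v : Y ⟶ Y')
      (g : Y'.obj ⟶ (F.obj X).obj),
    η X Y' (f ≫ v.hom) g = η X Y f (v.hom ≫ g)

end Serre

section Triangulated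

variable [HasZeroObject D] [Preadditive D] [HasShift D ℤ]
  [∀ n : ℤ, (shiftFunctor D n).Additive] [Pretriangulated D]

/-- A t-structure on the strictly full (pretriangulated) subcategory of `D` with objects `S`:
a pair `(U, V)` of strictly full subcategories with `U[1] ⊆ U`, `V ⊆ V[1]`,
`Hom(U[1], V) = 0`, and truncation triangles for every object of `S`. -/
structure TStructureOn (S : Set D) where
  U : Set D
  V : Set D
  U_subset : U ⊆ S
  V_subset : V ⊆ S
  U_iso : ∀ ⦃X Y : D⦄, (X ≅ Y) → X ∈ U → Y ∈ U
  V_iso : ∀ ⦃X Y : D⦄, (X ≅ Y) → X ∈ V → Y ∈ V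
  U_shift : ∀ ⦃X : D⦄, X ∈ U → X⟦(1 : ℤ)⟧ ∈ U
  V_shift : ∀ ⦃X : D⦄, X ∈ V → X⟦(-1 : ℤ)⟧ ∈ V
  hom_zero : ∀ ⦃X Y : D⦄, X ∈ U → Y ∈ V → ∀ f : X⟦(1 : ℤ)⟧ ⟶ Y, f = 0
  exists_triangle : ∀ C₀ ∈ S, ∃ (X Y : D) (_ : X ∈ U) (_ : Y⟦(1 : ℤ)⟧ ∈ V)
    (f : X ⟶ C₀) (g : C₀ ⟶ Y) (h : Y ⟶ X⟦(1 : ℤ)⟧), Triangle.mk f g h ∈ distTriang D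

namespace TStructureOn

variable {D} {S : Set D} (t : TStructureOn D S)

/-- The heart of a t-structure, as a set of objects. -/
def heartSet : Set D := t.U ∩ t.V

/-- The heart of a t-structure, as a (full sub)category. -/
abbrev Heart := ObjectProperty.FullSubcategory (· ∈ t.heartSet)

/-- The inclusion of the heart into the ambient category. -/
def heartIncl : t.Heart ⥤ D := ObjectProperty.ι _

/-- A t-structure is bounded if every object of the (sub)category lies in some shift
of the aisle and in some shift of the coaisle. -/
def IsBounded : Prop :=
  (∀ X ∈ S, ∃ n : ℤ, X⟦n⟧ ∈ t.U) ∧ (∀ X ∈ S, ∃ n : ℤ, X⟦n⟧ ∈ t.V)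

end TStructureOn

/-- The aisle `U` of a t-structure is stable under a Serre functor on the ambient
(sub)category. -/
def SerreStable (k : Type u₁) [Field k] [CategoryTheory.Linear k D] {S : Set D}
    (Se : SerreFunctorOn D k S) (U : Set D) : Prop :=
  ∀ X : ObjectProperty.FullSubcategory (· ∈ S), X.obj ∈ U → (Se.F.obj X).obj ∈ U

/-- A preaisle in the strictly full subcategory of `D` with objects `S`: a strictly full
subcategory closed under suspension and extensions. -/
def IsPreaisleOn (S P : Set D) : Prop :=
  P ⊆ S ∧ (∀ ⦃X Y : D⦄, (X ≅ Y) → X ∈ P → Y ∈ P) ∧ (∀ ⦃X : D⦄, X ∈ P → X⟦(1 : ℤ)⟧ ∈ P) ∧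
    (∀ T : Triangle D, (T ∈ distTriang D) → T.obj₁ ∈ P → T.obj₃ ∈ P → T.obj₂ ∈ S → T.obj₂ ∈ P)

/-- The smallest preaisle (in the subcategory with objects `S`) containing `E`. -/
def preaisleGenOn (S : Set D) (E : D) : Set D :=
  ⋂₀ {P : Set D | IsPreaisleOn D S P ∧ E ∈ P}

/-- A thick (triangulated, retract-closed) subcategory of the subcategory with objects `S`. -/
def IsThickOn (S P : Set D) : Prop :=
  P ⊆ S ∧ (∀ ⦃X Y : D⦄, (X ≅ Y) → X ∈ P → Y ∈ P) ∧
    (∀ ⦃X : D⦄, X ∈ P → X⟦(1 : ℤ)⟧ ∈ P ∧ X⟦(-1 : ℤ)⟧ ∈ P) ∧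
    (∀ T : Triangle D, (T ∈ distTriang D) → T.obj₁ ∈ P → T.obj₃ ∈ P → T.obj₂ ∈ S → T.obj₂ ∈ P) ∧
    (∀ ⦃X Y : D⦄, X ∈ P → Y ∈ S → ∀ (i : Y ⟶ X) (r : X ⟶ Y), i ≫ r = 𝟙 Y → Y ∈ P)

/-- The smallest thick subcategory (of the subcategory with objects `S`) containing `E`. -/
def thickGenOn (S : Set D) (E : D) : Set D :=
  ⋂₀ {P : Set D | IsThickOn D S P ∧ E ∈ P}

/-- `E` is a partial silting object: `Hom(E, E[n]) = 0` for `n > 0`. -/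
def IsPartialSilting (S : Set D) (E : D) : Prop :=
  E ∈ S ∧ ∀ n : ℤ, 0 < n → ∀ f : E ⟶ E⟦n⟧, f = 0

/-- `E` is a silting object: partial silting and it generates the category as a thick
subcategory. -/
def IsSilting (S : Set D) (E : D) : Prop :=
  IsPartialSilting D S E ∧ thickGenOn D S E = S

/-- `E` is a partial tilting object: `Hom(E, E[n]) = 0` for `n ≠ 0`. -/
def IsPartialTilting (S : Set D) (E : D) : Prop :=
  E ∈ S ∧ ∀ n : ℤ, n ≠ 0 → ∀ f : E ⟶ E⟦n⟧, f = 0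

/-- `E` is a tilting object: partial tilting and it generates the category as a thick
subcategory. -/
def IsTilting (S : Set D) (E : D) : Prop :=
  IsPartialTilting D S E ∧ thickGenOn D S E = S

/-- The aisle `U` of the t-structure `t` is finitely generated: it is the smallest
preaisle containing some partial silting object. -/
def TStructureOn.FinitelyGenerated {D : Type u} [Category.{v} D] [HasZeroObject D]
    [Preadditive D] [HasShift D ℤ] [∀ n : ℤ, (shiftFunctor D n).Additive] [Pretriangulated D]
    {S : Set D} (t : TStructureOn D S) : Prop :=
  ∃ E : D, IsPartialSilting D S E ∧ t.U = preaisleGenOn D S E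

/-- A torsion class in the abelian category whose objects are `H` (the heart of a
t-structure on `D`, where short exact sequences correspond to distinguished triangles):
a strictly full subcategory closed under extensions and quotients, such that the
inclusion admits a right adjoint (expressed pointwise). -/
def IsTorsionClassOn (H T : Set D) : Prop :=
  T ⊆ H ∧ (∀ ⦃X Y : D⦄, (X ≅ Y) → X ∈ T → Y ∈ T) ∧
    (∀ Tr : Triangle D, (Tr ∈ distTriang D) → Tr.obj₁ ∈ T → Tr.obj₃ ∈ T → Tr.obj₂ ∈ H →
      Tr.obj₂ ∈ T) ∧
    (∀ Tr : Triangle D, (Tr ∈ distTriang D) → Tr.obj₁ ∈ H → Tr.obj₂ ∈ T → Tr.obj₃ ∈ H →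
      Tr.obj₃ ∈ T) ∧
    (∀ X ∈ H, ∃ (TX : D) (_ : TX ∈ T) (c : TX ⟶ X),
      ∀ (Y : D), Y ∈ T → ∀ φ : Y ⟶ X, ∃! ψ : Y ⟶ TX, ψ ≫ c = φ)

/-- A tilting torsion class: a torsion class such that every object of the heart embeds
(in the heart) into an object of the torsion class. -/
def IsTiltingTorsionClassOn (H T : Set D) : Prop :=
  IsTorsionClassOn D H T ∧ ∀ (X : D) (hX : X ∈ H), ∃ (T' : D) (_ : T' ∈ T) (hT'H : T' ∈ H)
    (f : X ⟶ T'), Mono (ObjectProperty.homMk f : (⟨X, hX⟩ : ObjectProperty.FullSubcategory (· ∈ H)) ⟶ ⟨T', hT'H⟩)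

end Triangulated

section Db

variable (A : Type u) [Category.{v} A] [Abelian A] [HasDerivedCategory.{w} A]

/-- The objects of the bounded derived category `D^b(A)`, i.e. the objects of the
derived category of `A` with bounded cohomology. -/
def Bdd : Set (DerivedCategory A) :=
  {X | ∃ a b : ℤ, ∀ n : ℤ, (n < a ∨ b < n) →
    IsZero ((DerivedCategory.homologyFunctor A n).obj X)}

lemma shift_mem_Bdd {X : DerivedCategory A} (hX : X ∈ Bdd A) (m : ℤ) : X⟦m⟧ ∈ Bdd A := by
  obtain ⟨a, b, h⟩ := hX
  refine ⟨a - m, b - m, fun n hn => ?_⟩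
  exact IsZero.of_iso (h (m + n) (by omega))
    (((DerivedCategory.homologyFunctor A 0).shiftIso m n (m + n) rfl).app X)

/-- The canonical functor `A ⥤ D^b(A) ⊆ D(A)`, sending an object to the corresponding
complex concentrated in degree `0`. -/
def singleQ : A ⥤ DerivedCategory A :=
  HomologicalComplex.single A (ComplexShape.up ℤ) 0 ⋙ DerivedCategory.Q

lemma singleQ_obj_mem_Bdd (M : A) : (singleQ A).obj M ∈ Bdd A := by
  refine ⟨0, 0, fun n hn => ?_⟩
  refine IsZero.of_iso ?_
    ((DerivedCategory.homologyFunctorFactors A n).app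
      ((HomologicalComplex.single A (ComplexShape.up ℤ) 0).obj M))
  exact HomologicalComplex.isZero_single_obj_homology _ _ M n (by omega)

/-- The bounded derived category of `A`, as the full subcategory of `D(A)` whose objects
have bounded cohomology. -/
abbrev BddCat := ObjectProperty.FullSubcategory (· ∈ Bdd A)

/-- The suspension functor on the bounded derived category. -/
def bddShift : BddCat A ⥤ BddCat A :=
  ObjectProperty.lift _ (ObjectProperty.ι _ ⋙ shiftFunctor (DerivedCategory A) (1 : ℤ))
    (fun X => shift_mem_Bdd A X.property 1)

/-- The canonical functor `A ⥤ D^b(A)`. -/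
def bddSingle : A ⥤ BddCat A :=
  ObjectProperty.lift _ (singleQ A) (singleQ_obj_mem_Bdd A)

/-- `A` has global dimension at most `d`: `Ext^n(M, N) = 0` for all `n > d`
(expressed via morphisms in the derived category). -/
def HasGlobalDimensionLE (d : ℕ) : Prop :=
  ∀ (M N : A) (n : ℤ), (d : ℤ) < n → ∀ f : (singleQ A).obj M ⟶ ((singleQ A).obj N)⟦n⟧, f = 0

/-- An abelian category is hereditary if `Ext²(-, -) = 0` (equivalently, it has global
dimension at most `1`). -/
def IsHereditaryCat : Prop := HasGlobalDimensionLE A 1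

/-- `A` is Ext-finite over `k`: all Ext-spaces between objects of `A` are
finite-dimensional over `k`. -/
def ExtFinite (k : Type u₁) [Field k] [CategoryTheory.Linear k (DerivedCategory A)] : Prop :=
  ∀ (M N : A) (n : ℤ),
    FiniteDimensional k ((singleQ A).obj M ⟶ ((singleQ A).obj N)⟦n⟧)

/-- The Grothendieck group `K₀` of an abelian category. -/
def K0 : Type u :=
  FreeAbelianGroup (Quotient (isIsomorphicSetoid A)) ⧸
    AddSubgroup.closure {x | ∃ Sc : ShortComplex A, Sc.ShortExact ∧
      x = FreeAbelianGroup.of (Quotient.mk (isIsomorphicSetoid A) Sc.X₂)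
        - FreeAbelianGroup.of (Quotient.mk (isIsomorphicSetoid A) Sc.X₁)
        - FreeAbelianGroup.of (Quotient.mk (isIsomorphicSetoid A) Sc.X₃)}

/-- The class of an object of `A` in `K₀(A)`. -/
def K0cls (M : A) : K0 A :=
  QuotientAddGroup.mk (FreeAbelianGroup.of (Quotient.mk (isIsomorphicSetoid A) M))

/-- `D^b(A)` is discrete: for every function `v : ℤ → K₀(A)` there are only finitely many
isomorphism classes of bounded objects `X` with `[H^i(X)] = v i` for all `i`. -/
def DerivedDiscrete : Prop :=
  ∀ v : ℤ → K0 A,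
    Set.Finite {c : Quotient (isIsomorphicSetoid (BddCat A)) |
      ∃ X : BddCat A, Quotient.mk (isIsomorphicSetoid (BddCat A)) X = c ∧
        ∀ i : ℤ, K0cls A ((DerivedCategory.homologyFunctor A i).obj X.obj) = v i}

end Db

/-- The property that the inclusion `ι : H ⟶ D` of a (heart-like) abelian subcategory
of the triangulated category `D` lifts to a triangulated equivalence from `D^b(H)` to
the strictly full subcategory of `D` with objects `S`. -/
structure DbEquivalence (H : Type u₁) [Category.{v₁} H] [Abelian H] [HasDerivedCategory.{w₁} H]
    (D : Type u) [Category.{v} D] [HasZeroObject D] [Preadditive D] [HasShift D ℤ]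
    [∀ n : ℤ, (shiftFunctor D n).Additive] [Pretriangulated D]
    (S : Set D) (ι : H ⥤ D) where
  /-- the underlying functor `D^b(H) ⥤ D` -/
  F : BddCat H ⥤ D
  mem : ∀ X : BddCat H, F.obj X ∈ S
  /-- `F` commutes with the suspension -/
  commShift : bddShift H ⋙ F ≅ F ⋙ shiftFunctor D (1 : ℤ)
  /-- `F` sends distinguished triangles of `D^b(H)` to distinguished triangles of `D` -/
  map_distinguished : ∀ (T : Triangle (DerivedCategory H)) (_ : T ∈ distTriang (DerivedCategory H))
      (h₁ : T.obj₁ ∈ Bdd H) (h₂ : T.obj₂ ∈ Bdd H) (h₃ : T.obj₃ ∈ Bdd H),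
      Triangle.mk (F.map (X := ⟨T.obj₁, h₁⟩) (Y := ⟨T.obj₂, h₂⟩) (ObjectProperty.homMk T.mor₁))
        (F.map (X := ⟨T.obj₂, h₂⟩) (Y := ⟨T.obj₃, h₃⟩) (ObjectProperty.homMk T.mor₂))
        (F.map (X := ⟨T.obj₃, h₃⟩) (Y := (bddShift H).obj ⟨T.obj₁, h₁⟩) (ObjectProperty.homMk T.mor₃) ≫
          commShift.hom.app ⟨T.obj₁, h₁⟩) ∈ distTriang D
  faithful : F.Faithful
  full : F.Full
  /-- `F` is essentially surjective onto the subcategory with objects `S` -/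
  essSurj : ∀ Y : D, Y ∈ S → ∃ X : BddCat H, Nonempty (F.obj X ≅ Y)
  /-- `F` extends the inclusion `ι` of `H` -/
  extends_incl : bddSingle H ⋙ F ≅ ι

section Algebra

/-- A ring `Γ` has global dimension at most `d`. -/
def RingGlobalDimLE (Γ : Type u) [Ring Γ] (d : ℕ) : Prop :=
  letI : HasDerivedCategory (ModuleCat.{u} Γ) := HasDerivedCategory.standard _
  HasGlobalDimensionLE (ModuleCat.{u} Γ) d

/-- The category `mod Λ` of finite-dimensional (equivalently, finitely generated) right
modules over a finite-dimensional algebra `Λ`, i.e. finitely generated left modules over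
`Λᵐᵒᵖ`. -/
abbrev ModA (Λ : Type u) [Ring Λ] := FGModuleCat Λᵐᵒᵖ

/-- A finite-dimensional algebra is hereditary if the category of its right modules is
hereditary, i.e. if `Λ` has right global dimension at most 1. -/
def HereditaryAlg (Λ : Type u) [Ring Λ] : Prop := RingGlobalDimLE Λᵐᵒᵖ 1

end Algebra

end Paper

namespace Paper

/-- Composite of a chain of morphisms `Z 0 ⟶ Z 1 ⟶ ⋯ ⟶ Z n`. -/
def chainComp {D : Type u} [Category.{v} D] (Z : ℕ → D) (g : ∀ i : ℕ, Z i ⟶ Z (i + 1)) :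
    ∀ n : ℕ, Z 0 ⟶ Z n
  | 0 => 𝟙 (Z 0)
  | n + 1 => chainComp Z g n ≫ g n

variable (A : Type u) [Category.{v} A] [Abelian A] [HasDerivedCategory.{w} A]

/-- The aisle of the standard t-structure on `D^b(A)`: bounded complexes with vanishing
cohomology in positive degrees. -/
def stdAisle : Set (DerivedCategory A) :=
  {X | X ∈ Bdd A ∧ ∀ n : ℤ, 0 < n → IsZero ((DerivedCategory.homologyFunctor A n).obj X)}

/-- The coaisle of the standard t-structure on `D^b(A)`: bounded complexes with vanishing
cohomology in negative degrees. -/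
def stdCoaisle : Set (DerivedCategory A) :=
  {X | X ∈ Bdd A ∧ ∀ n : ℤ, n < 0 → IsZero ((DerivedCategory.homologyFunctor A n).obj X)}

end Paper

/-!
Triangles with all three vertices in the heart `H` are its short exact sequences. So an
epimorphism `e : C ⟶ X` of `H` has a kernel `K` sitting in a triangle `K ⟶ C ⟶ X ⟶ K⟦1⟧`, and
every `f : X ⟶ Y⟦n⟧` with `e ≫ f = 0` factors through the connecting morphism `X ⟶ K⟦1⟧` by a
morphism coming from `K ⟶ Y⟦n - 1⟧`. Induction on `n` turns condition (1) into a factorization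
of `f` through objects `Aᵢ⟦i⟧` with `Aᵢ ∈ H`, which is condition (3); dually, condition (2)
peels off the last step. Conversely, the first step `X ⟶ A₁⟦1⟧` of such a chain is the class
of an extension `A₁ ⟶ E ⟶ X` in `H`, and `E ⟶ X` is an epimorphism effacing `f`; dually the
last step yields the monomorphism of condition (2).
-/

namespace CategoryTheory.ObjectProperty.FullSubcategory

variable {C : Type*} [Category C] [Preadditive C] {P : ObjectProperty C}

lemma epi_iff_cancel_zero {X Y : P.FullSubcategory} (f : X ⟶ Y) :
    Epi f ↔ ∀ Z : C, P Z → ∀ g : Y.obj ⟶ Z, f.hom ≫ g = 0 → g = 0 := by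
  rw [Preadditive.epi_iff_cancel_zero]
  refine ⟨fun h Z hZ g hg => ?_, fun h Z g hg => ?_⟩
  · simpa using congrArg InducedCategory.Hom.hom (h ⟨Z, hZ⟩ (homMk g) (by ext; simpa using hg))
  · ext
    exact h Z.obj Z.property g.hom (by simpa using congrArg InducedCategory.Hom.hom hg)

lemma mono_iff_cancel_zero {X Y : P.FullSubcategory} (f : X ⟶ Y) :
    Mono f ↔ ∀ Z : C, P Z → ∀ g : Z ⟶ X.obj, g ≫ f.hom = 0 → g = 0 := by
  rw [Preadditive.mono_iff_cancel_zero]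
  refine ⟨fun h Z hZ g hg => ?_, fun h Z g hg => ?_⟩
  · simpa using congrArg InducedCategory.Hom.hom (h ⟨Z, hZ⟩ (homMk g) (by ext; simpa using hg))
  · ext
    exact h Z.obj Z.property g.hom (by simpa using congrArg InducedCategory.Hom.hom hg)

end CategoryTheory.ObjectProperty.FullSubcategory

namespace Paper

open CategoryTheory Pretriangulated

lemma chainComp_succ' {D : Type u} [Category.{v} D] (Z : ℕ → D) (g : ∀ i : ℕ, Z i ⟶ Z (i + 1))
    (n : ℕ) :
    chainComp Z g (n + 1) = g 0 ≫ chainComp (fun i => Z (i + 1)) (fun i => g (i + 1)) n := by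
  induction n with
  | zero => simp [chainComp]
  | succ n ih => rw [chainComp, ih, chainComp, Category.assoc]

section Bdd

variable (A : Type u) [Category.{v} A] [Abelian A] [HasDerivedCategory.{w} A]

instance : ObjectProperty.IsClosedUnderIsomorphisms (· ∈ Bdd A) where
  of_iso e := fun ⟨a, b, h⟩ =>
    ⟨a, b, fun n hn => (h n hn).of_iso ((DerivedCategory.homologyFunctor A n).mapIso e.symm)⟩

instance : ObjectProperty.IsStableUnderShift (· ∈ Bdd A) ℤ where
  isStableUnderShiftBy m := ⟨fun _ hX => shift_mem_Bdd A hX m⟩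

instance : ObjectProperty.IsTriangulatedClosed₂ (· ∈ Bdd A) :=
  .mk' fun T hT ⟨a₁, b₁, h₁⟩ ⟨a₃, b₃, h₃⟩ => ⟨min a₁ a₃, max b₁ b₃, fun n hn =>
    ((DerivedCategory.homologyFunctor A n).map_distinguished_exact T hT).isZero_X₂
      ((h₁ n (by omega)).eq_of_src _ _) ((h₃ n (by omega)).eq_of_tgt _ _)⟩

end Bdd

end Paper

namespace Paper.TStructureOn

open CategoryTheory Limits Pretriangulated

variable {D : Type u} [Category.{v} D] [HasZeroObject D] [Preadditive D] [HasShift D ℤ]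
  [∀ n : ℤ, (shiftFunctor D n).Additive] [Pretriangulated D] {S : Set D} (t : TStructureOn D S)

lemma eq_zero_of_mem_U_of_shift_one_mem_V {X Y : D} (hX : X ∈ t.U) (hY : Y⟦(1 : ℤ)⟧ ∈ t.V)
    (f : X ⟶ Y) : f = 0 :=
  (shiftFunctor D (1 : ℤ)).map_injective (by simpa using t.hom_zero hX hY (f⟦(1 : ℤ)⟧'))

lemma eq_zero_of_mem_U_of_mem_V {X Y : D} (hX : X ∈ t.U) (hY : Y ∈ t.V)
    (f : X ⟶ Y⟦(-1 : ℤ)⟧) : f = 0 :=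
  t.eq_zero_of_mem_U_of_shift_one_mem_V hX
    (t.V_iso ((shiftFunctorCompIsoId D (-1 : ℤ) 1 (by norm_num)).app Y).symm hY) f

lemma mem_V_of_shift_one_mem_V {Y : D} (hY : Y⟦(1 : ℤ)⟧ ∈ t.V) : Y ∈ t.V :=
  t.V_iso ((shiftFunctorCompIsoId D (1 : ℤ) (-1) (by norm_num)).app Y) (t.V_shift hY)

lemma mem_heartSet_of_iso {X Y : D} (e : X ≅ Y) (hX : X ∈ t.heartSet) : Y ∈ t.heartSet :=
  ⟨t.U_iso e hX.1, t.V_iso e hX.2⟩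

lemma isZero_obj₃_of_mor₂_eq_zero {T : Triangle D} (hT : T ∈ distTriang D) (h : T.mor₂ = 0)
    (h₁ : T.obj₁ ∈ t.U) (h₃ : T.obj₃ ∈ t.V) : IsZero T.obj₃ := by
  obtain ⟨g, hg⟩ := Triangle.yoneda_exact₃ T hT (𝟙 T.obj₃) (by simp [h])
  rw [IsZero.iff_id_eq_zero, hg, t.hom_zero h₁ h₃ g, comp_zero]

lemma isZero_obj₁_of_mor₁_eq_zero {T : Triangle D} (hT : T ∈ distTriang D) (h : T.mor₁ = 0)
    (h₁ : T.obj₁ ∈ t.U) (h₃ : T.obj₃ ∈ t.V) : IsZero T.obj₁ := by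
  obtain ⟨g, hg⟩ := Triangle.coyoneda_exact₂ _ (inv_rot_of_distTriang T hT) (𝟙 T.obj₁)
    ((Category.id_comp _).trans h)
  have hg₀ : g = 0 := t.eq_zero_of_mem_U_of_mem_V h₁ h₃ g
  rw [IsZero.iff_id_eq_zero, hg, hg₀]
  exact zero_comp

lemma mem_U_of_forall_eq_zero {X : D} (hX : X ∈ S)
    (h : ∀ Y : D, Y⟦(1 : ℤ)⟧ ∈ t.V → ∀ f : X ⟶ Y, f = 0) : X ∈ t.U := by
  obtain ⟨P, W, hP, hW, p, w, d, hT⟩ := t.exists_triangle X hX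
  have hW₀ : IsZero W :=
    t.isZero_obj₃_of_mor₂_eq_zero hT (h W hW w) hP (t.mem_V_of_shift_one_mem_V hW)
  have : IsIso p := (Triangle.isZero₃_iff_isIso₁ _ hT).1 hW₀
  exact t.U_iso (asIso p) hP

lemma mem_V_of_forall_eq_zero {X : D} (hX : X⟦(-1 : ℤ)⟧ ∈ S)
    (h : ∀ Z ∈ t.U, ∀ f : Z⟦(1 : ℤ)⟧ ⟶ X, f = 0) : X ∈ t.V := by
  obtain ⟨P, W, hP, hW, p, w, d, hT⟩ := t.exists_triangle _ hX
  let ε := (shiftFunctorCompIsoId D (-1 : ℤ) 1 (by norm_num)).app X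
  have hp : p = 0 := (shiftFunctor D (1 : ℤ)).map_injective <| by
    simpa using (cancel_mono ε.hom).1 ((h P hP _).trans zero_comp.symm)
  have hP₀ : IsZero P := t.isZero_obj₁_of_mor₁_eq_zero hT hp hP (t.mem_V_of_shift_one_mem_V hW)
  have : IsIso w := (Triangle.isZero₁_iff_isIso₂ _ hT).1 hP₀
  exact t.V_iso ((shiftFunctor D (1 : ℤ)).mapIso (asIso w).symm ≪≫ ε) hW

lemma epi_of_distTriang {K C X : t.Heart} {i : K.obj ⟶ C.obj} (e : C ⟶ X)
    {δ : X.obj ⟶ K.obj⟦(1 : ℤ)⟧} (hT : Triangle.mk i e.hom δ ∈ distTriang D) : Epi e := by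
  refine (ObjectProperty.FullSubcategory.epi_iff_cancel_zero e).2 fun T hT' φ hφ => ?_
  obtain ⟨ψ, rfl⟩ := Triangle.yoneda_exact₃ _ hT φ hφ
  have hψ : ψ = 0 := t.hom_zero K.2.1 hT'.2 ψ
  rw [hψ]
  exact comp_zero

lemma mono_of_distTriang {Y C Q : t.Heart} (m : Y ⟶ C) {p : C.obj ⟶ Q.obj}
    {d : Q.obj ⟶ Y.obj⟦(1 : ℤ)⟧} (hT : Triangle.mk m.hom p d ∈ distTriang D) : Mono m := by
  refine (ObjectProperty.FullSubcategory.mono_iff_cancel_zero m).2 fun T hT' φ hφ => ?_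
  obtain ⟨ψ, rfl⟩ := Triangle.coyoneda_exact₂ _ (inv_rot_of_distTriang _ hT) φ hφ
  have hψ : ψ = 0 := t.eq_zero_of_mem_U_of_mem_V hT'.1 Q.2.2 ψ
  rw [hψ]
  exact zero_comp

def shiftedHeart (a : ℤ) : Set D := {X | X⟦-a⟧ ∈ t.heartSet}

lemma mem_shiftedHeart_zero {X : D} (hX : X ∈ t.heartSet) : X ∈ t.shiftedHeart 0 :=
  t.mem_heartSet_of_iso ((shiftFunctorZero' D (-0 : ℤ) (by simp)).app X).symm hX

lemma shift_mem_shiftedHeart {X : D} {a : ℤ} (hX : X ∈ t.shiftedHeart a) (b c : ℤ)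
    (h : a + b = c) : X⟦b⟧ ∈ t.shiftedHeart c :=
  t.mem_heartSet_of_iso ((shiftFunctorAdd' D b (-c) (-a) (by omega)).app X) hX

lemma mem_shiftedHeart_of_iso {X Y : D} {a : ℤ} (e : X ≅ Y) (hX : X ∈ t.shiftedHeart a) :
    Y ∈ t.shiftedHeart a :=
  t.mem_heartSet_of_iso ((shiftFunctor D (-a)).mapIso e) hX

/-- `t.HeartChain a n f`: the morphism `f` is a composite `Z₀ ⟶ Z₁ ⟶ ⋯ ⟶ Zₙ` of `n ≥ 1`
morphisms with `Zᵢ ∈ t.shiftedHeart (a + i)`. -/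
inductive HeartChain : ℤ → ℕ → {X Y : D} → (X ⟶ Y) → Prop
  | single {a : ℤ} {X Y : D} (f : X ⟶ Y) (hX : X ∈ t.shiftedHeart a)
      (hY : Y ∈ t.shiftedHeart (a + 1)) : HeartChain a 1 f
  | cons {a : ℤ} {n : ℕ} {X Z Y : D} (g : X ⟶ Z) {f : Z ⟶ Y} (hX : X ∈ t.shiftedHeart a)
      (hf : HeartChain (a + 1) n f) : HeartChain a (n + 1) (g ≫ f)

namespace HeartChain

variable {t}

lemma shift {a : ℤ} {n : ℕ} {X Y : D} {f : X ⟶ Y} (h : t.HeartChain a n f) (b : ℤ) :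
    t.HeartChain (a + b) n (f⟦b⟧') := by
  induction h with
  | single f hX hY =>
    exact .single _ (t.shift_mem_shiftedHeart hX b _ rfl)
      (t.shift_mem_shiftedHeart hY b _ (by ring))
  | cons g hX _ ih =>
    rw [Functor.map_comp]
    exact .cons _ (t.shift_mem_shiftedHeart hX b _ rfl) (by rwa [add_right_comm])

lemma comp_iso {a : ℤ} {n : ℕ} {X Y Y' : D} {f : X ⟶ Y} (h : t.HeartChain a n f) (e : Y ≅ Y') :
    t.HeartChain a n (f ≫ e.hom) := by
  induction h with
  | single f hX hY => exact .single _ hX (t.mem_shiftedHeart_of_iso e hY)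
  | cons g hX _ ih =>
    rw [Category.assoc]
    exact .cons g hX (ih e)

lemma snoc {a : ℤ} {n : ℕ} {X Y W : D} {f : X ⟶ Y} (h : t.HeartChain a n f) (g : Y ⟶ W)
    (hW : W ∈ t.shiftedHeart (a + n + 1)) : t.HeartChain a (n + 1) (f ≫ g) := by
  induction h with
  | single f hX hY => exact .cons f hX (.single g hY hW)
  | cons g' hX _ ih =>
    rw [Category.assoc]
    exact .cons g' hX (ih g (by convert hW using 2; push_cast; ring))

lemma exists_chainComp {a : ℤ} {n : ℕ} {X Y : D} {f : X ⟶ Y} (h : t.HeartChain a n f) :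
    ∃ (Z : ℕ → D) (g : ∀ i : ℕ, Z i ⟶ Z (i + 1)) (h0 : Z 0 = X) (hn : Z n = Y),
      (∀ i ≤ n, Z i ∈ t.shiftedHeart (a + i)) ∧
        eqToHom h0.symm ≫ chainComp Z g n ≫ eqToHom hn = f := by
  induction h with
  | @single a X Y f hX hY =>
    refine ⟨fun | 0 => X | _ + 1 => Y, fun | 0 => f | _ + 1 => 𝟙 Y, rfl, rfl, ?_, ?_⟩
    · rintro (_ | _ | i) hi
      · simpa using hX
      · simpa using hY
      · omega
    · simp [chainComp]
  | @cons a n X Z' Y g f hX _ ih =>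
    obtain ⟨Z, g', h0, hn, hZ, rfl⟩ := ih
    refine ⟨fun | 0 => X | i + 1 => Z i, fun | 0 => g ≫ eqToHom h0.symm | i + 1 => g' i,
      rfl, hn, ?_, ?_⟩
    · rintro (_ | i) hi
      · simpa using hX
      · convert hZ i (by omega) using 2
        push_cast
        ring
    · simp [chainComp_succ']

end HeartChain

def HigherExtEffaceableByEpi : Prop :=
  ∀ (X Y : t.Heart) (n : ℕ), 2 ≤ n → ∀ f : X.obj ⟶ Y.obj⟦(n : ℤ)⟧,
    ∃ (C : t.Heart) (e : C ⟶ X), Epi e ∧ e.hom ≫ f = 0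

def HigherExtEffaceableByMono : Prop :=
  ∀ (X Y : t.Heart) (n : ℕ), 2 ≤ n → ∀ f : X.obj ⟶ Y.obj⟦(n : ℤ)⟧,
    ∃ (C : t.Heart) (m : Y ⟶ C), Mono m ∧ f ≫ m.hom⟦(n : ℤ)⟧' = 0

def HigherExtFactorsThroughHeart : Prop :=
  ∀ (X Y : t.Heart) (n : ℕ), 2 ≤ n → ∀ f : X.obj ⟶ Y.obj⟦(n : ℤ)⟧,
    ∃ (Z : ℕ → D) (g : ∀ i : ℕ, Z i ⟶ Z (i + 1)) (h0 : Z 0 = X.obj) (hn : Z n = Y.obj⟦(n : ℤ)⟧),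
      (∀ i ≤ n, Z i ∈ t.shiftedHeart i) ∧ eqToHom h0.symm ≫ chainComp Z g n ≫ eqToHom hn = f

lemma higherExtFactorsThroughHeart_of_heartChain
    (h : ∀ (n : ℕ) (X Y : t.Heart) (f : X.obj ⟶ Y.obj⟦((n + 1 : ℕ) : ℤ)⟧),
      t.HeartChain 0 (n + 1) f) : t.HigherExtFactorsThroughHeart := by
  intro X Y n hn f
  obtain ⟨n, rfl⟩ : ∃ m, n = m + 1 := ⟨n - 1, by omega⟩
  obtain ⟨Z, g, h0, hn', hZ, hf⟩ := (h n X Y f).exists_chainComp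
  exact ⟨Z, g, h0, hn', fun i hi => zero_add (i : ℤ) ▸ hZ i hi, hf⟩

section

variable [ObjectProperty.IsClosedUnderIsomorphisms (· ∈ S)]
  [ObjectProperty.IsTriangulatedClosed₂ (· ∈ S)]

lemma obj₂_mem_U_of_distTriang {T : Triangle D} (hT : T ∈ distTriang D) (h₁ : T.obj₁ ∈ t.U)
    (h₃ : T.obj₃ ∈ t.U) : T.obj₂ ∈ t.U := by
  have h₂ : T.obj₂ ∈ S := ObjectProperty.ext_of_isTriangulatedClosed₂ (· ∈ S) T hT
    (t.U_subset h₁) (t.U_subset h₃)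
  refine t.mem_U_of_forall_eq_zero h₂ fun Y hY f => ?_
  obtain ⟨g, rfl⟩ :=
    Triangle.yoneda_exact₂ T hT f (t.eq_zero_of_mem_U_of_shift_one_mem_V h₁ hY _)
  rw [t.eq_zero_of_mem_U_of_shift_one_mem_V h₃ hY g, comp_zero]

lemma obj₃_mem_U_of_distTriang {T : Triangle D} (hT : T ∈ distTriang D) (h₁ : T.obj₁ ∈ t.U)
    (h₂ : T.obj₂ ∈ t.U) : T.obj₃ ∈ t.U :=
  t.obj₂_mem_U_of_distTriang (rot_of_distTriang T hT) h₂ (t.U_shift h₁)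

lemma mem_U_of_shift_one_mem_U {M : D} (hM : M ∈ S) (hM₁ : M⟦(1 : ℤ)⟧ ∈ t.U)
    (h : ∀ T ∈ t.heartSet, ∀ φ : M⟦(1 : ℤ)⟧ ⟶ T, φ = 0) : M ∈ t.U := by
  obtain ⟨P, W, hP, hW, p, w, d, hT⟩ := t.exists_triangle M hM
  have hW₁ : W⟦(1 : ℤ)⟧ ∈ t.U :=
    t.obj₃_mem_U_of_distTriang (Triangle.shift_distinguished _ hT 1) (t.U_shift hP) hM₁
  have hw : w = 0 := (shiftFunctor D (1 : ℤ)).map_injective <| by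
    simpa using h _ ⟨hW₁, hW⟩ ((1 : ℤ).negOnePow • w⟦(1 : ℤ)⟧')
  have hW₀ : IsZero W :=
    t.isZero_obj₃_of_mor₂_eq_zero hT hw hP (t.mem_V_of_shift_one_mem_V hW)
  have : IsIso p := (Triangle.isZero₃_iff_isIso₁ _ hT).1 hW₀
  exact t.U_iso (asIso p) hP

variable [ObjectProperty.IsStableUnderShift (· ∈ S) ℤ]

lemma obj₂_mem_V_of_distTriang {T : Triangle D} (hT : T ∈ distTriang D) (h₁ : T.obj₁ ∈ t.V)
    (h₃ : T.obj₃ ∈ t.V) : T.obj₂ ∈ t.V := by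
  have h₂ : T.obj₂ ∈ S := ObjectProperty.ext_of_isTriangulatedClosed₂ (· ∈ S) T hT
    (t.V_subset h₁) (t.V_subset h₃)
  refine t.mem_V_of_forall_eq_zero (ObjectProperty.le_shift (· ∈ S) (-1 : ℤ) _ h₂)
    fun Z hZ f => ?_
  obtain ⟨g, rfl⟩ := Triangle.coyoneda_exact₂ T hT f (t.hom_zero hZ h₃ _)
  rw [t.hom_zero hZ h₁ g, zero_comp]

lemma obj₂_mem_heartSet_of_distTriang {T : Triangle D} (hT : T ∈ distTriang D)
    (h₁ : T.obj₁ ∈ t.heartSet) (h₃ : T.obj₃ ∈ t.heartSet) : T.obj₂ ∈ t.heartSet :=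
  ⟨t.obj₂_mem_U_of_distTriang hT h₁.1 h₃.1, t.obj₂_mem_V_of_distTriang hT h₁.2 h₃.2⟩

lemma mem_V_of_shift_neg_one_mem_V {N : D} (hN : N⟦(-1 : ℤ)⟧ ∈ t.V)
    (h : ∀ T ∈ t.heartSet, ∀ φ : T ⟶ N⟦(-1 : ℤ)⟧, φ = 0) : N ∈ t.V := by
  obtain ⟨P, W, hP, hW, p, w, d, hT⟩ := t.exists_triangle _ (t.V_subset hN)
  have hW' : W ∈ t.V := t.mem_V_of_shift_one_mem_V hW
  have hPV : P ∈ t.V :=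
    t.obj₂_mem_V_of_distTriang (inv_rot_of_distTriang _ hT) (t.V_shift hW') hN
  have hP₀ : IsZero P := t.isZero_obj₁_of_mor₁_eq_zero hT (h P ⟨hP, hPV⟩ p) hP hW'
  have : IsIso w := (Triangle.isZero₁_iff_isIso₂ _ hT).1 hP₀
  exact t.V_iso ((shiftFunctor D (1 : ℤ)).mapIso (asIso w).symm ≪≫
    (shiftFunctorCompIsoId D (-1 : ℤ) 1 (by norm_num)).app N) hW

lemma exists_distTriang_of_hom_shift_one (X K : t.Heart) (δ : X.obj ⟶ K.obj⟦(1 : ℤ)⟧) :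
    ∃ (E : t.Heart) (i : K.obj ⟶ E.obj) (p : E.obj ⟶ X.obj),
      Triangle.mk i p δ ∈ distTriang D := by
  obtain ⟨E, i, p, hT⟩ := distinguished_cocone_triangle₂ δ
  exact ⟨⟨E, t.obj₂_mem_heartSet_of_distTriang hT K.2 X.2⟩, i, p, hT⟩

lemma exists_distTriang_of_epi {C X : t.Heart} (e : C ⟶ X) [Epi e] :
    ∃ (K : t.Heart) (i : K.obj ⟶ C.obj) (δ : X.obj ⟶ K.obj⟦(1 : ℤ)⟧),
      Triangle.mk i e.hom δ ∈ distTriang D := by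
  obtain ⟨K, i, δ, hT⟩ := distinguished_cocone_triangle₁ e.hom
  have hT' := inv_rot_of_distTriang _ hT
  have hKS : K ∈ S := ObjectProperty.ext_of_isTriangulatedClosed₂ (· ∈ S) _ hT'
    (ObjectProperty.le_shift (· ∈ S) (-1 : ℤ) _ (t.U_subset X.2.1)) (t.U_subset C.2.1)
  have hKV : K ∈ t.V := t.obj₂_mem_V_of_distTriang hT' (t.V_shift X.2.2) C.2.2
  have hKU : K ∈ t.U := by
    refine t.mem_U_of_shift_one_mem_U hKS
      (t.obj₃_mem_U_of_distTriang (rot_of_distTriang _ hT) C.2.1 X.2.1) fun T hT₀ φ => ?_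
    have hδφ : δ ≫ φ = 0 :=
      (ObjectProperty.FullSubcategory.epi_iff_cancel_zero e).1 inferInstance T hT₀ _
        (by rw [← Category.assoc, show e.hom ≫ δ = 0 from comp_distTriang_mor_zero₂₃ _ hT,
          zero_comp])
    obtain ⟨ψ, rfl⟩ := Triangle.yoneda_exact₃ _ (rot_of_distTriang _ hT) φ hδφ
    have hψ : ψ = 0 := t.hom_zero C.2.1 hT₀.2 ψ
    rw [hψ]
    exact comp_zero
  exact ⟨⟨K, hKU, hKV⟩, i, δ, hT⟩

lemma exists_distTriang_of_mono {Y C : t.Heart} (m : Y ⟶ C) [Mono m] :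
    ∃ (Q : t.Heart) (p : C.obj ⟶ Q.obj) (d : Q.obj ⟶ Y.obj⟦(1 : ℤ)⟧),
      Triangle.mk m.hom p d ∈ distTriang D := by
  obtain ⟨Q, p, d, hT⟩ := distinguished_cocone_triangle m.hom
  have hT' := inv_rot_of_distTriang _ hT
  have hT'' := inv_rot_of_distTriang _ hT'
  have hQV : Q ∈ t.V := by
    refine t.mem_V_of_shift_neg_one_mem_V
      (t.obj₂_mem_V_of_distTriang hT'' (t.V_shift C.2.2) Y.2.2) fun T hT₀ φ => ?_
    have hφ : φ ≫ (Triangle.mk m.hom p d).invRotate.mor₁ = 0 :=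
      (ObjectProperty.FullSubcategory.mono_iff_cancel_zero m).1 inferInstance T hT₀ _
        ((Category.assoc _ _ _).trans
          ((congrArg (φ ≫ ·) (comp_distTriang_mor_zero₁₂ _ hT')).trans comp_zero))
    obtain ⟨ψ, rfl⟩ := Triangle.coyoneda_exact₂ _ hT'' φ hφ
    have hψ : ψ = 0 := t.eq_zero_of_mem_U_of_mem_V hT₀.1 C.2.2 ψ
    rw [hψ]
    exact zero_comp
  exact ⟨⟨Q, t.obj₃_mem_U_of_distTriang hT Y.2.1 C.2.1, hQV⟩, p, d, hT⟩

lemma exists_epi_comp_eq_zero (X : t.Heart) {Z : D} (hZ : Z ∈ t.shiftedHeart 1)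
    (δ : X.obj ⟶ Z) : ∃ (E : t.Heart) (e : E ⟶ X), Epi e ∧ e.hom ≫ δ = 0 := by
  let ε := (shiftFunctorCompIsoId D (-1 : ℤ) 1 (by norm_num)).app Z
  have hZ' : Z⟦(-1 : ℤ)⟧ ∈ t.heartSet := hZ
  obtain ⟨E, i, p, hT⟩ := t.exists_distTriang_of_hom_shift_one X ⟨_, hZ'⟩ (δ ≫ ε.inv)
  refine ⟨E, ObjectProperty.homMk p, t.epi_of_distTriang _ hT, ?_⟩
  rw [← cancel_mono ε.inv, zero_comp, Category.assoc]
  exact comp_distTriang_mor_zero₂₃ _ hT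

lemma exists_mono_comp_shift_eq_zero (Y : t.Heart) {Z : D} {k n : ℤ}
    (hZ : Z ∈ t.shiftedHeart k) (hkn : k + 1 = n) (u : Z ⟶ Y.obj⟦n⟧) :
    ∃ (E : t.Heart) (m : Y ⟶ E), Mono m ∧ u ≫ m.hom⟦n⟧' = 0 := by
  let ε := shiftFunctorAdd' D n (-k) 1 (by omega)
  have hZ' : Z⟦-k⟧ ∈ t.heartSet := hZ
  obtain ⟨E, i, p, hT⟩ :=
    t.exists_distTriang_of_hom_shift_one ⟨_, hZ'⟩ Y (u⟦-k⟧' ≫ ε.inv.app Y.obj)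
  refine ⟨E, ObjectProperty.homMk i, t.mono_of_distTriang _ hT, ?_⟩
  have h : (u⟦-k⟧' ≫ ε.inv.app Y.obj) ≫ i⟦(1 : ℤ)⟧' = 0 := comp_distTriang_mor_zero₃₁ _ hT
  rw [Category.assoc, ← ε.inv.naturality, ← Category.assoc, Functor.comp_map, ← Functor.map_comp,
    Preadditive.IsIso.comp_right_eq_zero] at h
  exact (shiftFunctor D (-k)).map_injective (by simpa using h)

variable {t}

lemma HigherExtFactorsThroughHeart.higherExtEffaceableByEpi
    (h : t.HigherExtFactorsThroughHeart) : t.HigherExtEffaceableByEpi := by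
  intro X Y n hn f
  obtain ⟨Z, g, h0, hn', hZ, rfl⟩ := h X Y n hn f
  obtain ⟨n, rfl⟩ : ∃ m, n = m + 1 := ⟨n - 1, by omega⟩
  obtain ⟨E, e, he, hδ⟩ :=
    t.exists_epi_comp_eq_zero X (hZ 1 (by omega)) (eqToHom h0.symm ≫ g 0)
  refine ⟨E, e, he, ?_⟩
  rw [chainComp_succ']
  simp only [← Category.assoc] at hδ ⊢
  rw [hδ, zero_comp, zero_comp]

lemma HigherExtFactorsThroughHeart.higherExtEffaceableByMono
    (h : t.HigherExtFactorsThroughHeart) : t.HigherExtEffaceableByMono := by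
  intro X Y n hn f
  obtain ⟨Z, g, h0, hn', hZ, rfl⟩ := h X Y n hn f
  obtain ⟨n, rfl⟩ : ∃ m, n = m + 1 := ⟨n - 1, by omega⟩
  obtain ⟨E, m, hm, hu⟩ := t.exists_mono_comp_shift_eq_zero Y (hZ n (by omega))
    (by push_cast; rfl) (g n ≫ eqToHom hn')
  refine ⟨E, m, hm, ?_⟩
  simp only [chainComp, Category.assoc] at hu ⊢
  rw [hu, comp_zero, comp_zero]

lemma HigherExtEffaceableByEpi.heartChain (h : t.HigherExtEffaceableByEpi) (n : ℕ)
    (X Y : t.Heart) (f : X.obj ⟶ Y.obj⟦((n + 1 : ℕ) : ℤ)⟧) : t.HeartChain 0 (n + 1) f := by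
  induction n generalizing X Y with
  | zero =>
    exact .single f (t.mem_shiftedHeart_zero X.2)
      (t.shift_mem_shiftedHeart (t.mem_shiftedHeart_zero Y.2) _ _ (by simp))
  | succ n ih =>
    obtain ⟨C, e, he, hef⟩ := h X Y (n + 1 + 1) (by omega) f
    obtain ⟨K, i, δ, hT⟩ := t.exists_distTriang_of_epi e
    obtain ⟨k, rfl⟩ := Triangle.yoneda_exact₃ _ hT f hef
    let ε : Y.obj⟦((n + 1 + 1 : ℕ) : ℤ)⟧ ≅ Y.obj⟦((n + 1 : ℕ) : ℤ)⟧⟦(1 : ℤ)⟧ :=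
      (shiftFunctorAdd' D _ 1 _ (by push_cast; ring)).app Y.obj
    obtain ⟨k', hk'⟩ := (shiftFunctor D (1 : ℤ)).map_surjective (k ≫ ε.hom)
    have hk : k'⟦(1 : ℤ)⟧' ≫ ε.symm.hom = k := by simp [hk']
    exact .cons δ (t.mem_shiftedHeart_zero X.2) (hk ▸ ((ih K Y k').shift 1).comp_iso ε.symm)

lemma HigherExtEffaceableByMono.heartChain (h : t.HigherExtEffaceableByMono) (n : ℕ)
    (X Y : t.Heart) (f : X.obj ⟶ Y.obj⟦((n + 1 : ℕ) : ℤ)⟧) : t.HeartChain 0 (n + 1) f := by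
  induction n generalizing X Y with
  | zero =>
    exact .single f (t.mem_shiftedHeart_zero X.2)
      (t.shift_mem_shiftedHeart (t.mem_shiftedHeart_zero Y.2) _ _ (by simp))
  | succ n ih =>
    obtain ⟨C, m, hm, hfm⟩ := h X Y (n + 1 + 1) (by omega) f
    obtain ⟨Q, p, d, hT⟩ := t.exists_distTriang_of_mono m
    let N : ℤ := ((n + 1 + 1 : ℕ) : ℤ)
    obtain ⟨u, π, rfl⟩ : ∃ (u : X.obj ⟶ Q.obj⟦N⟧⟦(-1 : ℤ)⟧) (π : Q.obj⟦N⟧⟦(-1 : ℤ)⟧ ⟶ Y.obj⟦N⟧),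
        f = u ≫ π := by
      have hf : f ≫ (N.negOnePow • m.hom⟦N⟧') = 0 := by
        rw [Linear.comp_units_smul, hfm, smul_zero]
      obtain ⟨u, hu⟩ := Triangle.coyoneda_exact₂ _
        (inv_rot_of_distTriang _ (Triangle.shift_distinguished _ hT N)) f hf
      exact ⟨u, _, hu⟩
    let ε : Q.obj⟦((n + 1 : ℕ) : ℤ)⟧ ≅ Q.obj⟦N⟧⟦(-1 : ℤ)⟧ :=
      (shiftFunctorAdd' D N (-1) _ (by push_cast [N]; ring)).app Q.obj
    have hu := (ih X Q (u ≫ ε.inv)).comp_iso ε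
    rw [Category.assoc, ε.inv_hom_id, Category.comp_id] at hu
    exact hu.snoc π
      (t.shift_mem_shiftedHeart (t.mem_shiftedHeart_zero Y.2) _ _ (by push_cast [N]; ring))

end

end Paper.TStructureOn

open Paper in
/-- For a t-structure `(U, V)` on `D^b(A)` with heart `H(U)`, the three
factorization conditions of Proposition 3.10 are equivalent. -/
theorem derived_equivalence_conditions_equivalent
    (A : Type u) [Category.{v} A] [Abelian A] [HasDerivedCategory.{w} A]
    (t : TStructureOn (DerivedCategory A) (Bdd A)) :
    ((∀ (X Y : t.Heart) (n : ℕ), 2 ≤ n → ∀ f : X.obj ⟶ Y.obj⟦(n : ℤ)⟧,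
        ∃ (C : t.Heart) (e : C ⟶ X), Epi e ∧ e.hom ≫ f = 0) ↔
     (∀ (X Y : t.Heart) (n : ℕ), 2 ≤ n → ∀ f : X.obj ⟶ Y.obj⟦(n : ℤ)⟧,
        ∃ (C : t.Heart) (m : Y ⟶ C), Mono m ∧
          f ≫ m.hom⟦(n : ℤ)⟧' = 0)) ∧
    ((∀ (X Y : t.Heart) (n : ℕ), 2 ≤ n → ∀ f : X.obj ⟶ Y.obj⟦(n : ℤ)⟧,
        ∃ (C : t.Heart) (m : Y ⟶ C), Mono m ∧
          f ≫ m.hom⟦(n : ℤ)⟧' = 0) ↔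
     (∀ (X Y : t.Heart) (n : ℕ), 2 ≤ n → ∀ f : X.obj ⟶ Y.obj⟦(n : ℤ)⟧,
        ∃ (Z : ℕ → DerivedCategory A) (g : ∀ i : ℕ, Z i ⟶ Z (i + 1)) (h0 : Z 0 = X.obj)
          (hn : Z n = Y.obj⟦(n : ℤ)⟧),
          (∀ i ≤ n, (Z i)⟦(-(i : ℤ))⟧ ∈ t.heartSet) ∧
            eqToHom h0.symm ≫ chainComp Z g n ≫ eqToHom hn = f)) := by
  show (t.HigherExtEffaceableByEpi ↔ t.HigherExtEffaceableByMono) ∧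
    (t.HigherExtEffaceableByMono ↔ t.HigherExtFactorsThroughHeart)
  have h₁₃ (h : t.HigherExtEffaceableByEpi) : t.HigherExtFactorsThroughHeart :=
    TStructureOn.higherExtFactorsThroughHeart_of_heartChain t h.heartChain
  have h₂₃ (h : t.HigherExtEffaceableByMono) : t.HigherExtFactorsThroughHeart :=
    TStructureOn.higherExtFactorsThroughHeart_of_heartChain t h.heartChain
  exact ⟨⟨fun h => (h₁₃ h).higherExtEffaceableByMono, fun h => (h₂₃ h).higherExtEffaceableByEpi⟩,
    ⟨h₂₃, fun h => h.higherExtEffaceableByMono⟩⟩
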